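/- arXiv:cond-mat/0510472 — 2 statements merged into one kernel-verified Lean document; each statement's English description precedes it below -/
import Mathlib

section
/- Let Σ := ∑_{n≥1} K(n) ≤ 1 and suppose ∑_{n≥1} n K(n) = μ < ∞. Then the free energy of the homogeneous pinning model satisfies F(h_c(0) - δ) ≥ δ/μ' for some constant μ' > 0 and all sufficiently small δ > 0; in particular the transition is first order (the right derivative of F at h_c(0) from the localized side is bounded away from 0). -/
/-!
Write `Σ = ∑ K(n)` and `μ = ∑ n K(n)`. At `h = log Σ - δ` the renewal equation
`∑ K(n) e^{-h} e^{-x n} = 1` has a root `x ≥ 0` by the intermediate value theorem, since its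
left side equals `e^δ ≥ 1` at `x = 0` and decreases to `0`. Because `e^{-y} ≥ 1 - y`, the root
`x = F(h)` satisfies `e^δ (Σ - F(h) μ) ≤ Σ`, so `F(h) μ e^δ ≥ Σ (e^δ - 1) ≥ Σ δ`; for `δ ≤ 1`
this gives `F(h) ≥ δ / (e μ / Σ)`.
-/

open Real

lemma summable_of_tsum_ne_zero {α M : Type*} [AddCommMonoid M] [TopologicalSpace M]
    {f : α → M} (hf : ∑' i, f i ≠ 0) : Summable f := by
  by_contra hns
  exact hf (tsum_eq_zero_of_not_summable hns)

lemma le_natCast_add_one_mul {c : ℝ} (hc : 0 ≤ c) (n : ℕ) : c ≤ ((n : ℝ) + 1) * c :=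
  le_mul_of_one_le_left hc (by linarith [n.cast_nonneg (α := ℝ)])

section RenewalSeries

variable {a : ℕ → ℝ}

lemma mul_exp_neg_mul_succ_le {c x : ℝ} (hc : 0 ≤ c) (hx : 0 ≤ x) (n : ℕ) :
    c * exp (-x * (n + 1)) ≤ c * exp (-x) := by
  gcongr
  nlinarith [n.cast_nonneg (α := ℝ)]

lemma summable_mul_exp_neg_mul_succ (ha : ∀ n, 0 ≤ a n) (hsum : Summable a) {x : ℝ}
    (hx : 0 ≤ x) : Summable fun n => a n * exp (-x * (n + 1)) :=
  (hsum.mul_right (exp (-x))).of_nonneg_of_le (fun n => mul_nonneg (ha n) (exp_nonneg _))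
    (fun n => mul_exp_neg_mul_succ_le (ha n) hx n)

lemma tsum_mul_exp_neg_mul_succ_le (ha : ∀ n, 0 ≤ a n) (hsum : Summable a) {x : ℝ}
    (hx : 0 ≤ x) : ∑' n, a n * exp (-x * (n + 1)) ≤ (∑' n, a n) * exp (-x) := by
  rw [← tsum_mul_right]
  exact (summable_mul_exp_neg_mul_succ ha hsum hx).tsum_le_tsum
    (fun n => mul_exp_neg_mul_succ_le (ha n) hx n) (hsum.mul_right _)

lemma continuousOn_tsum_mul_exp_neg_mul_succ (ha : ∀ n, 0 ≤ a n) (hsum : Summable a) :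
    ContinuousOn (fun x => ∑' n, a n * exp (-x * (n + 1))) (Set.Ici 0) := by
  refine continuousOn_tsum (fun n => by fun_prop) hsum (fun n x (hx : 0 ≤ x) => ?_)
  rw [norm_of_nonneg (mul_nonneg (ha n) (exp_nonneg _))]
  calc a n * exp (-x * (n + 1)) ≤ a n * exp (-x) := mul_exp_neg_mul_succ_le (ha n) hx n
    _ ≤ a n := mul_le_of_le_one_right (ha n) (exp_le_one_iff.2 (neg_nonpos.2 hx))

lemma exists_nonneg_tsum_mul_exp_neg_mul_succ_eq_one (ha : ∀ n, 0 ≤ a n) (hsum : Summable a)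
    (hone : 1 ≤ ∑' n, a n) : ∃ x, 0 ≤ x ∧ ∑' n, a n * exp (-x * (n + 1)) = 1 := by
  set S := ∑' n, a n
  have hlog : 0 ≤ log S := log_nonneg hone
  have hat0 : ∑' n, a n * exp (-0 * (n + 1)) = S := by simp [S]
  have hatlog : ∑' n, a n * exp (-log S * (n + 1)) ≤ 1 := by
    calc _ ≤ S * exp (-log S) := tsum_mul_exp_neg_mul_succ_le ha hsum hlog
      _ = 1 := by rw [exp_neg, exp_log (by linarith), mul_inv_cancel₀ (by linarith)]
  obtain ⟨x, hx, hroot⟩ := intermediate_value_Icc' hlog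
    ((continuousOn_tsum_mul_exp_neg_mul_succ ha hsum).mono Set.Icc_subset_Ici_self)
    ⟨hatlog, hat0 ▸ hone⟩
  exact ⟨x, hx.1, hroot⟩

lemma tsum_sub_mul_tsum_le_one_of_tsum_mul_exp_neg_mul_succ_eq_one (ha : ∀ n, 0 ≤ a n)
    (hsum : Summable a) (hmean : Summable fun n : ℕ => ((n : ℝ) + 1) * a n) {x : ℝ}
    (hroot : ∑' n, a n * exp (-x * (n + 1)) = 1) :
    ∑' n, a n - x * ∑' n : ℕ, ((n : ℝ) + 1) * a n ≤ 1 := by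
  refine le_of_le_of_eq ?_ hroot
  rw [← tsum_mul_left, ← hsum.tsum_sub (hmean.mul_left x)]
  refine (hsum.sub (hmean.mul_left x)).tsum_le_tsum (fun n => ?_)
    (summable_of_tsum_ne_zero (by rw [hroot]; exact one_ne_zero))
  have := mul_le_mul_of_nonneg_left (add_one_le_exp (-x * (n + 1))) (ha n)
  linarith

end RenewalSeries

lemma summable_natCast_add_one_mul_succ_of_summable_natCast_mul {K : ℕ → ℝ}
    (hmean : Summable fun n : ℕ => (n : ℝ) * K n) :
    Summable fun n : ℕ => ((n : ℝ) + 1) * K (n + 1) := by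
  simpa using (summable_nat_add_iff 1).2 hmean

theorem pinning_first_order_of_finite_mean_general
    (K : ℕ → ℝ) (hKnonneg : ∀ n, 0 ≤ K n)
    (hSpos : 0 < ∑' n : ℕ, K (n + 1))
    (hmean : Summable (fun n : ℕ => (n : ℝ) * K n))
    (F : ℝ → ℝ)
    (hFsol : ∀ h : ℝ,
      (∃ x : ℝ, 0 ≤ x ∧
        ∑' n : ℕ, K (n + 1) * Real.exp (-h) * Real.exp (-x * (n + 1)) = 1) →
      ∑' n : ℕ, K (n + 1) * Real.exp (-h) * Real.exp (-(F h) * (n + 1)) = 1) :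
    ∃ μ' : ℝ, 0 < μ' ∧ ∃ δ₀ : ℝ, 0 < δ₀ ∧ ∀ δ : ℝ, 0 < δ → δ ≤ δ₀ →
      δ / μ' ≤ F (Real.log (∑' n : ℕ, K (n + 1)) - δ) := by
  set S := ∑' n : ℕ, K (n + 1)
  set μ := ∑' n : ℕ, ((n : ℝ) + 1) * K (n + 1)
  have hμsum := summable_natCast_add_one_mul_succ_of_summable_natCast_mul hmean
  have hSsum : Summable fun n => K (n + 1) :=
    hμsum.of_nonneg_of_le (fun n => hKnonneg _) (fun n => le_natCast_add_one_mul (hKnonneg _) n)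
  have hμpos : 0 < μ :=
    hSpos.trans_le <| hSsum.tsum_le_tsum (fun n => le_natCast_add_one_mul (hKnonneg _) n) hμsum
  refine ⟨exp 1 * μ / S, by positivity, 1, one_pos, fun δ hδ hδ1 => ?_⟩
  set h := log S - δ
  have hc : S * exp (-h) = exp δ := by
    rw [neg_sub, exp_sub, exp_log hSpos, mul_div_cancel₀ _ hSpos.ne']
  have ha : ∀ n, 0 ≤ K (n + 1) * exp (-h) := fun n => mul_nonneg (hKnonneg _) (exp_nonneg _)
  have hroot := hFsol h <| exists_nonneg_tsum_mul_exp_neg_mul_succ_eq_one ha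
    (hSsum.mul_right _) (by rw [tsum_mul_right, hc]; exact one_le_exp hδ.le)
  have hlin := tsum_sub_mul_tsum_le_one_of_tsum_mul_exp_neg_mul_succ_eq_one ha
    (hSsum.mul_right _) (by simpa only [mul_assoc] using hμsum.mul_right (exp (-h))) hroot
  simp only [← mul_assoc, tsum_mul_right, ← sub_mul] at hlin
  have hgap : S * δ ≤ F h * μ * exp δ := by
    have hdecay : (S - F h * μ) * exp δ ≤ S := by
      simpa [← hc, ← mul_assoc, mul_right_comm _ S] using mul_le_mul_of_nonneg_right hlin hSpos.le
    nlinarith [mul_le_mul_of_nonneg_left (add_one_le_exp δ) hSpos.le]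
  have hFμ : 0 ≤ F h * μ := by nlinarith [exp_pos δ, mul_pos hSpos hδ]
  rw [div_le_iff₀ (by positivity), mul_div_assoc', le_div_iff₀ hSpos]
  linarith [mul_le_mul_of_nonneg_left (exp_le_exp.2 hδ1) hFμ]

/-- If `∑ n K(n) = μ < ∞` then `F(h_c(0) - δ) ≥ δ/μ'` for some `μ' > 0` and
all small `δ > 0`: the pure transition is first order. -/
theorem pinning_first_order_of_finite_mean
    (K : ℕ → ℝ) (hKnonneg : ∀ n, 0 ≤ K n)
    (hSpos : 0 < ∑' n : ℕ, K (n + 1)) (hSle : ∑' n : ℕ, K (n + 1) ≤ 1)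
    (hmean : Summable (fun n : ℕ => (n : ℝ) * K n))
    (F : ℝ → ℝ) (hFnonneg : ∀ h, 0 ≤ F h)
    (hFsol : ∀ h : ℝ,
      (∃ x : ℝ, 0 ≤ x ∧
        ∑' n : ℕ, K (n + 1) * Real.exp (-h) * Real.exp (-x * (n + 1)) = 1) →
      ∑' n : ℕ, K (n + 1) * Real.exp (-h) * Real.exp (-(F h) * (n + 1)) = 1)
    (hFnosol : ∀ h : ℝ,
      (¬ ∃ x : ℝ, 0 ≤ x ∧
        ∑' n : ℕ, K (n + 1) * Real.exp (-h) * Real.exp (-x * (n + 1)) = 1) →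
      F h = 0) :
    ∃ μ' : ℝ, 0 < μ' ∧ ∃ δ₀ : ℝ, 0 < δ₀ ∧ ∀ δ : ℝ, 0 < δ → δ ≤ δ₀ →
      δ / μ' ≤ F (Real.log (∑' n : ℕ, K (n + 1)) - δ) :=
  pinning_first_order_of_finite_mean_general K hKnonneg hSpos hmean F hFsol
end

section
/- Suppose K(n) = C n^{-α} (1 + o(1)) with 1 < α < 2 and C > 0. Then as δ ↓ 0, the free energy of the homogeneous pinning model satisfies F(h_c(0) - δ) = δ^{1/(α-1)} · (L(δ)) where L(δ) is bounded above and below by positive constants; in particular F(h_c(0)-δ)/δ → 0, so the transition is of order higher than one. -/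
open Filter Set MeasureTheory Real Topology

/-!
Write `S = ∑ K(n)` and `Φ(x) = ∑ K(n) (1 - e^{-xn})` (`laplaceDefect K`). For `δ > 0` the equation
defining `F(h_c(0) - δ)` has a solution (intermediate value theorem), and it reads
`Φ(F(h_c(0) - δ)) = S (1 - e^{-δ}) ≍ δ`. The power law `K(n) ≍ n^{-α}` makes `Φ(x) ≍ x^{α-1}`
as `x ↓ 0`: from above, `Φ(x) ≲ ∑ min(n^{-α}, x n^{1-α})`, which is compared with the integral of
`min(t^{-α}, x t^{1-α})` split at `t = 1/x`; from below, each of the `≍ 1/x` terms with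
`1/x ≤ n < 2/x` is `≳ x^α`, since there `1 - e^{-xn} ≥ 1 - e^{-1}`.
Inverting, `F(h_c(0) - δ) ≍ δ^{1/(α-1)}`, and `1/(α-1) > 1`.
-/

section PowerLaw

variable {α x : ℝ}

lemma summable_nat_add_one_rpow_neg (hα : 1 < α) :
    Summable fun n : ℕ => ((n : ℝ) + 1) ^ (-α) := by
  simpa using (summable_nat_add_iff 1).mpr (Real.summable_nat_rpow.mpr (neg_lt_neg hα))

lemma antitoneOn_min_rpow (hα : 1 ≤ α) (hx : 0 ≤ x) :
    AntitoneOn (fun t : ℝ => min (t ^ (-α)) (x * t ^ (1 - α))) (Ioi 0) := fun s hs t _ hst =>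
  min_le_min (rpow_le_rpow_of_nonpos hs hst (by linarith))
    (mul_le_mul_of_nonneg_left (rpow_le_rpow_of_nonpos hs hst (by linarith)) hx)

lemma integrableOn_Ioi_min_rpow (hα : 1 < α) (hx : 0 ≤ x) :
    IntegrableOn (fun t : ℝ => min (t ^ (-α)) (x * t ^ (1 - α))) (Ioi 1) := by
  refine (integrableOn_Ioi_rpow_of_lt (neg_lt_neg hα) one_pos).mono' (by fun_prop) ?_
  filter_upwards [ae_restrict_mem measurableSet_Ioi] with t ht
  have ht0 : 0 ≤ t := zero_le_one.trans ht.le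
  rw [norm_of_nonneg (le_min (rpow_nonneg ht0 _) (mul_nonneg hx (rpow_nonneg ht0 _)))]
  exact min_le_left _ _

lemma setIntegral_Ioi_one_min_rpow_le (hα₁ : 1 < α) (hα₂ : α < 2) (hx : 0 < x) (hx1 : x ≤ 1) :
    ∫ t in Ioi 1, min (t ^ (-α)) (x * t ^ (1 - α)) ≤
      (1 / (2 - α) + 1 / (α - 1)) * x ^ (α - 1) := by
  have hint := integrableOn_Ioi_min_rpow hα₁ hx.le
  have hx' : 1 ≤ x⁻¹ := one_le_inv_iff₀.mpr ⟨hx, hx1⟩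
  rw [← Ioc_union_Ioi_eq_Ioi hx', setIntegral_union (Ioc_disjoint_Ioi le_rfl) measurableSet_Ioi
    (hint.mono_set Ioc_subset_Ioi_self) (hint.mono_set (Ioi_subset_Ioi hx')), add_mul]
  gcongr
  · calc ∫ t in Ioc 1 x⁻¹, min (t ^ (-α)) (x * t ^ (1 - α))
        ≤ ∫ t in Ioc 1 x⁻¹, x * t ^ (1 - α) := by
          refine setIntegral_mono_on (hint.mono_set Ioc_subset_Ioi_self) ?_ measurableSet_Ioc
            fun t _ => min_le_right _ _
          have hcont : ContinuousOn (fun t : ℝ => x * t ^ (1 - α)) (Icc 1 x⁻¹) := by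
            fun_prop (disch := intro t ht; linarith [ht.1])
          exact hcont.integrableOn_Icc.mono_set Ioc_subset_Icc_self
      _ = x * ((x⁻¹ ^ (2 - α) - 1) / (2 - α)) := by
          rw [← intervalIntegral.integral_of_le hx', intervalIntegral.integral_const_mul,
            integral_rpow (Or.inl (by linarith))]
          norm_num [show 1 - α + 1 = 2 - α by ring]
      _ ≤ 1 / (2 - α) * x ^ (α - 1) := by
          have hpow : x * x⁻¹ ^ (2 - α) = x ^ (α - 1) := by
            rw [inv_rpow hx.le, ← rpow_neg hx.le, ← rpow_one_add' hx.le (by linarith)]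
            ring_nf
          rw [mul_div_assoc', mul_sub, hpow, div_eq_mul_one_div, mul_comm]
          gcongr
          linarith
  · calc ∫ t in Ioi x⁻¹, min (t ^ (-α)) (x * t ^ (1 - α))
        ≤ ∫ t in Ioi x⁻¹, t ^ (-α) :=
          setIntegral_mono_on (hint.mono_set (Ioi_subset_Ioi hx'))
            (integrableOn_Ioi_rpow_of_lt (neg_lt_neg hα₁) (by positivity)) measurableSet_Ioi
            fun t _ => min_le_left _ _
      _ = 1 / (α - 1) * x ^ (α - 1) := by
          rw [integral_Ioi_rpow_of_lt (neg_lt_neg hα₁) (by positivity), inv_rpow hx.le,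
            ← rpow_neg hx.le]
          rw [show -(-α + 1) = α - 1 by ring, show -α + 1 = -(α - 1) by ring, neg_div_neg_eq,
            div_eq_mul_one_div, mul_comm]

lemma tsum_min_rpow_le (hα₁ : 1 < α) (hα₂ : α < 2) (hx : 0 < x) (hx1 : x ≤ 1) :
    ∑' n : ℕ, min (((n : ℝ) + 1) ^ (-α)) (x * ((n : ℝ) + 1) ^ (1 - α)) ≤
      (1 + 1 / (2 - α) + 1 / (α - 1)) * x ^ (α - 1) := by
  set f : ℝ → ℝ := fun t => min (t ^ (-α)) (x * t ^ (1 - α))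
  have hf0 : ∀ t, 0 ≤ t → 0 ≤ f t := fun t ht =>
    le_min (rpow_nonneg ht _) (mul_nonneg hx.le (rpow_nonneg ht _))
  have hsum : Summable fun n : ℕ => f (n + 1) :=
    (summable_nat_add_one_rpow_neg hα₁).of_nonneg_of_le (fun n => hf0 _ (by positivity))
      fun n => min_le_left _ _
  have hanti : AntitoneOn f (Ici 1) :=
    (antitoneOn_min_rpow hα₁.le hx.le).mono fun t (ht : 1 ≤ t) => one_pos.trans_le ht
  have htail : ∑' n : ℕ, f ((n + 1 : ℕ) + 1) ≤ ∫ t in Ioi 1, f t := by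
    simpa [add_assoc, one_add_one_eq_two] using
      AntitoneOn.tsum_comp_add_le_integral 1 (by simpa using hanti)
        (by simpa using integrableOn_Ioi_min_rpow hα₁ hx.le)
        fun t ht => hf0 t (by simp at ht; linarith)
  have hhead : f 1 ≤ x ^ (α - 1) := by
    simpa [f, min_eq_right hx1] using rpow_le_rpow_of_exponent_ge hx hx1 (by linarith : α - 1 ≤ 1)
  calc ∑' n : ℕ, f (n + 1) = f 1 + ∑' n : ℕ, f ((n + 1 : ℕ) + 1) := by
        simpa using hsum.tsum_eq_zero_add
    _ ≤ x ^ (α - 1) + (1 / (2 - α) + 1 / (α - 1)) * x ^ (α - 1) :=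
        add_le_add hhead (htail.trans (setIntegral_Ioi_one_min_rpow_le hα₁ hα₂ hx hx1))
    _ = (1 + 1 / (2 - α) + 1 / (α - 1)) * x ^ (α - 1) := by ring

end PowerLaw

section Asymptotics

variable {K : ℕ → ℝ} {C α : ℝ}

lemma exists_le_mul_rpow_of_tendsto
    (hasym : Tendsto (fun n : ℕ => K n * (n : ℝ) ^ α) atTop (𝓝 C)) :
    ∃ D, 0 < D ∧ ∀ n : ℕ, K (n + 1) ≤ D * ((n : ℝ) + 1) ^ (-α) := by
  obtain ⟨D, hD⟩ := (hasym.comp (tendsto_add_atTop_nat 1)).bddAbove_range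
  refine ⟨max D 1, by positivity, fun n => ?_⟩
  have hpos : (0 : ℝ) < (n : ℝ) + 1 := by positivity
  have hbound : K (n + 1) * ((n : ℝ) + 1) ^ α ≤ max D 1 :=
    le_max_of_le_left (by simpa using hD ⟨n, rfl⟩)
  rwa [rpow_neg hpos.le, ← div_eq_mul_inv, le_div_iff₀ (by positivity)]

lemma eventually_half_mul_rpow_le_of_tendsto (hC : 0 < C)
    (hasym : Tendsto (fun n : ℕ => K n * (n : ℝ) ^ α) atTop (𝓝 C)) :
    ∀ᶠ n : ℕ in atTop, C / 2 * (n : ℝ) ^ (-α) ≤ K n := by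
  filter_upwards [hasym.eventually (lt_mem_nhds (half_lt_self hC)), eventually_gt_atTop 0]
    with n hK hn
  have hpos : (0 : ℝ) < n := by exact_mod_cast hn
  rw [rpow_neg hpos.le, ← div_eq_mul_inv, div_le_iff₀ (by positivity)]
  exact hK.le

lemma summable_of_tendsto_mul_rpow (hK : ∀ n, 0 ≤ K n) (hα : 1 < α)
    (hasym : Tendsto (fun n : ℕ => K n * (n : ℝ) ^ α) atTop (𝓝 C)) :
    Summable fun n => K (n + 1) := by
  obtain ⟨D, -, hD⟩ := exists_le_mul_rpow_of_tendsto hasym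
  exact ((summable_nat_add_one_rpow_neg hα).mul_left D).of_nonneg_of_le (fun n => hK _) hD

end Asymptotics

section LaplaceDefect

variable {K : ℕ → ℝ} {α x : ℝ}

noncomputable def laplaceDefect (K : ℕ → ℝ) (x : ℝ) : ℝ :=
  ∑' n : ℕ, K (n + 1) * (1 - exp (-x * (n + 1)))

lemma exp_neg_mul_le_one (hx : 0 ≤ x) (n : ℕ) : exp (-x * (n + 1)) ≤ 1 :=
  exp_le_one_iff.mpr (by nlinarith [n.cast_nonneg (α := ℝ)])

lemma summable_mul_exp_neg_mul (hK : ∀ n, 0 ≤ K n) (hKs : Summable fun n => K (n + 1))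
    (hx : 0 ≤ x) : Summable fun n : ℕ => K (n + 1) * exp (-x * (n + 1)) :=
  hKs.of_nonneg_of_le (fun _ => mul_nonneg (hK _) (exp_pos _).le)
    fun n => mul_le_of_le_one_right (hK _) (exp_neg_mul_le_one hx n)

lemma laplaceDefect_eq_sub (hK : ∀ n, 0 ≤ K n) (hKs : Summable fun n => K (n + 1)) (hx : 0 ≤ x) :
    laplaceDefect K x = ∑' n : ℕ, K (n + 1) - ∑' n : ℕ, K (n + 1) * exp (-x * (n + 1)) := by
  simp only [laplaceDefect, mul_one_sub]
  exact hKs.tsum_sub (summable_mul_exp_neg_mul hK hKs hx)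

lemma monotoneOn_laplaceDefect (hK : ∀ n, 0 ≤ K n) (hKs : Summable fun n => K (n + 1)) :
    MonotoneOn (laplaceDefect K) (Ici 0) := by
  intro x hx y hy hxy
  rw [laplaceDefect_eq_sub hK hKs hx, laplaceDefect_eq_sub hK hKs hy]
  refine sub_le_sub_left (Summable.tsum_le_tsum (fun n => ?_)
    (summable_mul_exp_neg_mul hK hKs hy) (summable_mul_exp_neg_mul hK hKs hx)) _
  gcongr
  exact hK _

lemma laplaceDefect_le_of_le_rpow {D : ℝ} (hK : ∀ n, 0 ≤ K n)
    (hD : ∀ n : ℕ, K (n + 1) ≤ D * ((n : ℝ) + 1) ^ (-α)) (hα₁ : 1 < α) (hα₂ : α < 2)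
    (hx : 0 < x) (hx1 : x ≤ 1) :
    laplaceDefect K x ≤ D * (1 + 1 / (2 - α) + 1 / (α - 1)) * x ^ (α - 1) := by
  have hD0 : 0 ≤ D := by simpa using (hK 1).trans (hD 0)
  have hterm : ∀ n : ℕ, K (n + 1) * (1 - exp (-x * (n + 1))) ≤
      D * min (((n : ℝ) + 1) ^ (-α)) (x * ((n : ℝ) + 1) ^ (1 - α)) := by
    intro n
    have hn : (0 : ℝ) < n + 1 := by positivity
    have hexp : 1 - exp (-x * (n + 1)) ≤ min 1 (x * (n + 1)) :=
      le_min (by linarith [exp_pos (-x * (n + 1))]) (by linarith [add_one_le_exp (-x * (n + 1))])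
    calc K (n + 1) * (1 - exp (-x * (n + 1)))
        ≤ D * ((n : ℝ) + 1) ^ (-α) * min 1 (x * (n + 1)) :=
          mul_le_mul (hD n) hexp (by linarith [exp_neg_mul_le_one hx.le n]) (by positivity)
      _ = D * min (((n : ℝ) + 1) ^ (-α)) (x * ((n : ℝ) + 1) ^ (1 - α)) := by
          rw [mul_assoc, mul_min_of_nonneg _ _ (by positivity), show 1 - α = -α + 1 by ring,
            rpow_add_one hn.ne']
          ring_nf
  have hmin :
      Summable fun n : ℕ => D * min (((n : ℝ) + 1) ^ (-α)) (x * ((n : ℝ) + 1) ^ (1 - α)) :=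
    ((summable_nat_add_one_rpow_neg hα₁).of_nonneg_of_le
      (fun n => le_min (by positivity) (by positivity)) fun n => min_le_left _ _).mul_left D
  calc laplaceDefect K x
      ≤ ∑' n : ℕ, D * min (((n : ℝ) + 1) ^ (-α)) (x * ((n : ℝ) + 1) ^ (1 - α)) :=
        Summable.tsum_le_tsum hterm (hmin.of_nonneg_of_le
          (fun n => mul_nonneg (hK _) (sub_nonneg.2 (exp_neg_mul_le_one hx.le n))) hterm) hmin
    _ ≤ D * ((1 + 1 / (2 - α) + 1 / (α - 1)) * x ^ (α - 1)) := by
        rw [tsum_mul_left]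
        exact mul_le_mul_of_nonneg_left (tsum_min_rpow_le hα₁ hα₂ hx hx1) hD0
    _ = D * (1 + 1 / (2 - α) + 1 / (α - 1)) * x ^ (α - 1) := by ring

lemma le_laplaceDefect_of_block {c : ℝ} {N M : ℕ} (hK : ∀ n, 0 ≤ K n)
    (hKs : Summable fun n => K (n + 1)) (hc : 0 ≤ c)
    (hN : ∀ n, N ≤ n → c * (n : ℝ) ^ (-α) ≤ K n) (hα : 0 ≤ α) (hNM : N ≤ M) (hxM : 1 ≤ x * M) :
    (1 - exp (-1)) * c * (M * (2 * M) ^ (-α)) ≤ laplaceDefect K x := by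
  have hx : 0 ≤ x := by
    by_contra! h
    nlinarith [M.cast_nonneg (α := ℝ)]
  have hterm : ∀ n ∈ Finset.Ico M (2 * M),
      (1 - exp (-1)) * c * (2 * M : ℝ) ^ (-α) ≤ K (n + 1) * (1 - exp (-x * (n + 1))) := by
    intro n hn
    rw [Finset.mem_Ico] at hn
    have hn1 : (M : ℝ) ≤ n := by exact_mod_cast hn.1
    have hn2 : (n : ℝ) + 1 ≤ 2 * M := by exact_mod_cast hn.2
    have hKn : c * (2 * M : ℝ) ^ (-α) ≤ K (n + 1) := calc
      c * (2 * M : ℝ) ^ (-α) ≤ c * ((n + 1 : ℕ) : ℝ) ^ (-α) := by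
        push_cast
        exact mul_le_mul_of_nonneg_left
          (rpow_le_rpow_of_nonpos (by positivity) hn2 (by linarith)) hc
      _ ≤ K (n + 1) := hN _ (by omega)
    have hexp : exp (-x * (n + 1)) ≤ exp (-1) := exp_le_exp.2 (by nlinarith)
    calc (1 - exp (-1)) * c * (2 * M : ℝ) ^ (-α) = c * (2 * M : ℝ) ^ (-α) * (1 - exp (-1)) := by
          ring
      _ ≤ K (n + 1) * (1 - exp (-x * (n + 1))) :=
          mul_le_mul hKn (by linarith) (sub_nonneg.2 (exp_le_one_iff.2 (by norm_num))) (hK _)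
  have hsum : Summable fun n : ℕ => K (n + 1) * (1 - exp (-x * (n + 1))) := by
    simpa only [mul_one_sub] using hKs.sub (summable_mul_exp_neg_mul hK hKs hx)
  calc (1 - exp (-1)) * c * (M * (2 * M) ^ (-α))
      = (Finset.Ico M (2 * M)).card • ((1 - exp (-1)) * c * (2 * M : ℝ) ^ (-α)) := by
        rw [Nat.card_Ico, nsmul_eq_mul, show 2 * M - M = M by omega]
        ring
    _ ≤ ∑ n ∈ Finset.Ico M (2 * M), K (n + 1) * (1 - exp (-x * (n + 1))) :=
        Finset.card_nsmul_le_sum _ _ _ hterm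
    _ ≤ laplaceDefect K x :=
        hsum.sum_le_tsum _ fun n _ => mul_nonneg (hK _) (sub_nonneg.2 (exp_neg_mul_le_one hx n))

lemma le_laplaceDefect_of_le_rpow {c : ℝ} {N : ℕ} (hK : ∀ n, 0 ≤ K n)
    (hKs : Summable fun n => K (n + 1)) (hc : 0 ≤ c)
    (hN : ∀ n, N ≤ n → c * (n : ℝ) ^ (-α) ≤ K n) (hα : 0 ≤ α) (hx : 0 < x) (hx1 : x ≤ 1)
    (hxN : N * x ≤ 1) :
    (1 - exp (-1)) * c * 4 ^ (-α) * x ^ (α - 1) ≤ laplaceDefect K x := by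
  set M := ⌈x⁻¹⌉₊
  have hM : x⁻¹ ≤ M := Nat.le_ceil _
  have hM2 : (M : ℝ) ≤ 2 * x⁻¹ := by
    linarith [Nat.ceil_lt_add_one (inv_nonneg.2 hx.le), one_le_inv_iff₀.2 ⟨hx, hx1⟩]
  have hNM : N ≤ M := by
    have : (N : ℝ) ≤ x⁻¹ := by rwa [← one_div, le_div_iff₀ hx]
    exact_mod_cast this.trans hM
  have hxM : 1 ≤ x * M := by rwa [← inv_mul_le_iff₀ hx, mul_one]
  have he : 0 ≤ 1 - exp (-1 : ℝ) := sub_nonneg.2 (exp_le_one_iff.2 (by norm_num))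
  calc (1 - exp (-1)) * c * 4 ^ (-α) * x ^ (α - 1)
      = (1 - exp (-1)) * c * (x⁻¹ * (4 * x⁻¹) ^ (-α)) := by
        rw [mul_rpow (by norm_num) (by positivity), inv_rpow hx.le, rpow_neg hx.le, inv_inv,
          rpow_sub_one hx.ne']
        field_simp
    _ ≤ (1 - exp (-1)) * c * (M * (2 * M) ^ (-α)) := by
        refine mul_le_mul_of_nonneg_left (mul_le_mul hM ?_ (by positivity) (by positivity))
          (mul_nonneg he hc)
        exact rpow_le_rpow_of_nonpos (by positivity) (by linarith) (by linarith)
    _ ≤ laplaceDefect K x := le_laplaceDefect_of_block hK hKs hc hN hα hNM hxM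

lemma exists_laplaceDefect_bounds {C : ℝ} (hK : ∀ n, 0 ≤ K n) (hC : 0 < C) (hα₁ : 1 < α)
    (hα₂ : α < 2) (hasym : Tendsto (fun n : ℕ => K n * (n : ℝ) ^ α) atTop (𝓝 C)) :
    ∃ a b x₀ : ℝ, 0 < a ∧ 0 < b ∧ 0 < x₀ ∧ ∀ x ∈ Icc 0 x₀,
      a * x ^ (α - 1) ≤ laplaceDefect K x ∧ laplaceDefect K x ≤ b * x ^ (α - 1) := by
  obtain ⟨D, hD0, hD⟩ := exists_le_mul_rpow_of_tendsto hasym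
  obtain ⟨N, hN⟩ := eventually_atTop.1 (eventually_half_mul_rpow_le_of_tendsto hC hasym)
  have he : 0 < 1 - exp (-1 : ℝ) := sub_pos.2 (exp_lt_one_iff.2 (by norm_num))
  have hα₁' : 0 < α - 1 := sub_pos.2 hα₁
  have hα₂' : 0 < 2 - α := sub_pos.2 hα₂
  refine ⟨(1 - exp (-1)) * (C / 2) * 4 ^ (-α), D * (1 + 1 / (2 - α) + 1 / (α - 1)),
    1 / (N + 1), by positivity, by positivity, by positivity, ?_⟩
  rintro x ⟨hx0, hxN⟩
  rcases hx0.eq_or_lt with rfl | hx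
  · simp [laplaceDefect, zero_rpow hα₁'.ne']
  rw [le_div_iff₀ (by positivity)] at hxN
  have hx1 : x ≤ 1 := by nlinarith [N.cast_nonneg (α := ℝ)]
  exact ⟨le_laplaceDefect_of_le_rpow hK (summable_of_tendsto_mul_rpow hK hα₁ hasym)
      (by positivity) hN (by linarith) hx hx1 (by linarith),
    laplaceDefect_le_of_le_rpow hK hD hα₁ hα₂ hx hx1⟩

lemma exists_tsum_mul_exp_neg_mul_eq (hK : ∀ n, 0 ≤ K n) (hKs : Summable fun n => K (n + 1))
    {δ : ℝ} (hδ : 0 ≤ δ) :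
    ∃ x, 0 ≤ x ∧
      ∑' n : ℕ, K (n + 1) * exp (-x * (n + 1)) = (∑' n : ℕ, K (n + 1)) * exp (-δ) := by
  set L : ℝ → ℝ := fun x => ∑' n : ℕ, K (n + 1) * exp (-x * (n + 1))
  have hcont : ContinuousOn L (Icc 0 δ) :=
    continuousOn_tsum (fun n => by fun_prop) hKs fun n x hx => by
      rw [norm_of_nonneg (mul_nonneg (hK _) (exp_pos _).le)]
      exact mul_le_of_le_one_right (hK _) (exp_neg_mul_le_one hx.1 n)
  have hL0 : L 0 = ∑' n : ℕ, K (n + 1) := by simp [L]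
  have hLδ : L δ ≤ (∑' n : ℕ, K (n + 1)) * exp (-δ) := by
    rw [← tsum_mul_right]
    refine Summable.tsum_le_tsum (fun n => ?_) (summable_mul_exp_neg_mul hK hKs hδ)
      (hKs.mul_right _)
    gcongr
    · exact hK _
    · nlinarith [n.cast_nonneg (α := ℝ)]
  have hSδ : (∑' n : ℕ, K (n + 1)) * exp (-δ) ≤ L 0 := by
    rw [hL0]
    exact mul_le_of_le_one_right (tsum_nonneg fun n => hK _) (exp_le_one_iff.2 (by linarith))
  obtain ⟨x, hx, hLx⟩ := intermediate_value_Icc' hδ hcont ⟨hLδ, hSδ⟩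
  exact ⟨x, hx.1, hLx⟩

lemma tsum_mul_exp_neg_mul_exp_eq_one_iff (h x : ℝ) :
    ∑' n : ℕ, K (n + 1) * exp (-h) * exp (-x * (n + 1)) = 1 ↔
      ∑' n : ℕ, K (n + 1) * exp (-x * (n + 1)) = exp h := by
  simp_rw [mul_right_comm _ (exp (-h)), tsum_mul_right, exp_neg]
  exact mul_inv_eq_one₀ (exp_pos h).ne'

lemma exp_neg_one_mul_le_one_sub_exp_neg {δ : ℝ} (hδ₀ : 0 ≤ δ) (hδ₁ : δ ≤ 1) :
    exp (-1) * δ ≤ 1 - exp (-δ) := by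
  have h1 : (1 + δ) * exp (-δ) ≤ 1 := by
    calc (1 + δ) * exp (-δ) ≤ exp δ * exp (-δ) := by
          gcongr
          linarith [add_one_le_exp δ]
      _ = 1 := by rw [← exp_add, add_neg_cancel, exp_zero]
  have h2 : exp (-1) ≤ exp (-δ) := exp_le_exp.2 (by linarith)
  nlinarith

end LaplaceDefect

section Inversion

variable {Φ G : ℝ → ℝ} {p : ℝ}

lemma exists_rpow_bounds_of_comparable {a b x₀ m M : ℝ} (hp : 0 < p) (ha : 0 < a) (hb : 0 < b)
    (hx₀ : 0 < x₀) (hm : 0 < m) (hΦ : MonotoneOn Φ (Ici 0))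
    (hΦx : ∀ x ∈ Icc 0 x₀, a * x ^ p ≤ Φ x ∧ Φ x ≤ b * x ^ p) (hG₀ : ∀ δ, 0 ≤ G δ)
    (hG : ∀ δ ∈ Ioc 0 1, m * δ ≤ Φ (G δ) ∧ Φ (G δ) ≤ M * δ) :
    ∃ c₁ c₂ δ₀ : ℝ, 0 < c₁ ∧ 0 < c₂ ∧ 0 < δ₀ ∧ ∀ δ : ℝ, 0 < δ → δ ≤ δ₀ →
      c₁ * δ ^ (1 / p) ≤ G δ ∧ G δ ≤ c₂ * δ ^ (1 / p) := by
  have hM : 0 < M := by linarith [hG 1 ⟨one_pos, le_rfl⟩]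
  have hΦx₀ : a * x₀ ^ p ≤ Φ x₀ := (hΦx x₀ ⟨hx₀.le, le_rfl⟩).1
  refine ⟨(m / b) ^ (1 / p), (M / a) ^ (1 / p), min 1 (a * x₀ ^ p / (2 * M)),
    by positivity, by positivity, by positivity, fun δ hδ hδ₀ => ?_⟩
  obtain ⟨hlow, hup⟩ := hG δ ⟨hδ, hδ₀.trans (min_le_left _ _)⟩
  have hGx₀ : G δ ≤ x₀ := by
    by_contra! h
    have hMδ : M * δ ≤ a * x₀ ^ p / 2 := by
      have := hδ₀.trans (min_le_right _ _)
      rw [le_div_iff₀ (by positivity)] at this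
      linarith
    have := hΦ hx₀.le (hG₀ δ) h.le
    have : 0 < a * x₀ ^ p := by positivity
    linarith
  obtain ⟨hΦlow, hΦup⟩ := hΦx (G δ) ⟨hG₀ δ, hGx₀⟩
  rw [← mul_rpow (by positivity) hδ.le, ← mul_rpow (by positivity) hδ.le, one_div,
    rpow_inv_le_iff_of_pos (by positivity) (hG₀ δ) hp,
    le_rpow_inv_iff_of_pos (hG₀ δ) (by positivity) hp, div_mul_eq_mul_div, div_mul_eq_mul_div,
    div_le_iff₀ hb, le_div_iff₀ ha]
  constructor <;> linarith

lemma tendsto_div_nhdsGT_zero_of_le_rpow {c δ₀ q : ℝ} (hq : 1 < q) (hδ₀ : 0 < δ₀)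
    (hG₀ : ∀ δ, 0 ≤ G δ) (hG : ∀ δ, 0 < δ → δ ≤ δ₀ → G δ ≤ c * δ ^ q) :
    Tendsto (fun δ => G δ / δ) (𝓝[>] 0) (𝓝 0) := by
  have hlim : Tendsto (fun δ : ℝ => c * δ ^ (q - 1)) (𝓝[>] 0) (𝓝 0) := by
    simpa [zero_rpow (sub_pos.2 hq).ne'] using
      ((continuousAt_rpow_const 0 (q - 1) (Or.inr (sub_pos.2 hq).le)).tendsto.const_mul
        c).mono_left nhdsWithin_le_nhds
  refine squeeze_zero' ?_ ?_ hlim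
  · filter_upwards [self_mem_nhdsWithin] with δ hδ using div_nonneg (hG₀ δ) (le_of_lt hδ)
  · filter_upwards [Ioo_mem_nhdsGT hδ₀] with δ hδ
    rw [div_le_iff₀ hδ.1, mul_assoc, ← rpow_add_one hδ.1.ne', sub_add_cancel]
    exact hG δ hδ.1 hδ.2.le

end Inversion

theorem pinning_higher_order_transition_general
    (K : ℕ → ℝ) (hKnonneg : ∀ n, 0 ≤ K n)
    (hSpos : 0 < ∑' n : ℕ, K (n + 1))
    (C α : ℝ) (hC : 0 < C) (hα₁ : 1 < α) (hα₂ : α < 2)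
    (hasym : Tendsto (fun n : ℕ => K n * (n : ℝ) ^ α) atTop (nhds C))
    (F : ℝ → ℝ) (hFnonneg : ∀ h, 0 ≤ F h)
    (hFsol : ∀ h : ℝ,
      (∃ x : ℝ, 0 ≤ x ∧
        ∑' n : ℕ, K (n + 1) * Real.exp (-h) * Real.exp (-x * (n + 1)) = 1) →
      ∑' n : ℕ, K (n + 1) * Real.exp (-h) * Real.exp (-(F h) * (n + 1)) = 1) :
    (∃ c₁ c₂ δ₀ : ℝ, 0 < c₁ ∧ 0 < c₂ ∧ 0 < δ₀ ∧ ∀ δ : ℝ, 0 < δ → δ ≤ δ₀ →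
      c₁ * δ ^ (1 / (α - 1)) ≤ F (Real.log (∑' n : ℕ, K (n + 1)) - δ) ∧
      F (Real.log (∑' n : ℕ, K (n + 1)) - δ) ≤ c₂ * δ ^ (1 / (α - 1))) ∧
    Tendsto (fun δ : ℝ => F (Real.log (∑' n : ℕ, K (n + 1)) - δ) / δ)
      (nhdsWithin 0 (Set.Ioi 0)) (nhds 0) := by
  set S := ∑' n : ℕ, K (n + 1)
  have hKs := summable_of_tendsto_mul_rpow hKnonneg hα₁ hasym
  have hexp : ∀ δ, exp (log S - δ) = S * exp (-δ) := fun δ => by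
    rw [exp_sub, exp_log hSpos, exp_neg, div_eq_mul_inv]
  have hdefect : ∀ δ, 0 ≤ δ → laplaceDefect K (F (log S - δ)) = S * (1 - exp (-δ)) := by
    intro δ hδ
    obtain ⟨x, hx, hLx⟩ := exists_tsum_mul_exp_neg_mul_eq hKnonneg hKs hδ
    have hsol := hFsol _
      ⟨x, hx, (tsum_mul_exp_neg_mul_exp_eq_one_iff _ _).2 (hLx.trans (hexp δ).symm)⟩
    rw [laplaceDefect_eq_sub hKnonneg hKs (hFnonneg _),
      (tsum_mul_exp_neg_mul_exp_eq_one_iff _ _).1 hsol, hexp, mul_one_sub]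
  have hG : ∀ δ ∈ Ioc (0 : ℝ) 1, S * exp (-1) * δ ≤ laplaceDefect K (F (log S - δ)) ∧
      laplaceDefect K (F (log S - δ)) ≤ S * δ := by
    rintro δ ⟨hδ₀, hδ₁⟩
    rw [hdefect δ hδ₀.le, mul_assoc]
    exact ⟨mul_le_mul_of_nonneg_left (exp_neg_one_mul_le_one_sub_exp_neg hδ₀.le hδ₁) hSpos.le,
      mul_le_mul_of_nonneg_left (by linarith [add_one_le_exp (-δ)]) hSpos.le⟩
  obtain ⟨a, b, x₀, ha, hb, hx₀, hbounds⟩ :=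
    exists_laplaceDefect_bounds hKnonneg hC hα₁ hα₂ hasym
  obtain ⟨c₁, c₂, δ₀, hc₁, hc₂, hδ₀, hF⟩ :=
    exists_rpow_bounds_of_comparable (G := fun δ => F (log S - δ)) (sub_pos.2 hα₁) ha hb hx₀
      (by positivity) (monotoneOn_laplaceDefect hKnonneg hKs) hbounds (fun _ => hFnonneg _) hG
  refine ⟨⟨c₁, c₂, δ₀, hc₁, hc₂, hδ₀, hF⟩, tendsto_div_nhdsGT_zero_of_le_rpow ?_ hδ₀
    (fun _ => hFnonneg _) fun δ hδ hδ' => (hF δ hδ hδ').2⟩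
  rw [lt_div_iff₀ (sub_pos.2 hα₁)]
  linarith

/-- If `K(n) ~ C n^{-α}` with `1 < α < 2`, then
`F(h_c(0) - δ) ≍ δ^{1/(α-1)}` as `δ ↓ 0`; in particular
`F(h_c(0) - δ)/δ → 0`, so the pure transition is of order higher than one. -/
theorem pinning_higher_order_transition
    (K : ℕ → ℝ) (hKnonneg : ∀ n, 0 ≤ K n)
    (hSpos : 0 < ∑' n : ℕ, K (n + 1)) (hSle : ∑' n : ℕ, K (n + 1) ≤ 1)
    (C α : ℝ) (hC : 0 < C) (hα₁ : 1 < α) (hα₂ : α < 2)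
    (hasym : Tendsto (fun n : ℕ => K n * (n : ℝ) ^ α) atTop (nhds C))
    (F : ℝ → ℝ) (hFnonneg : ∀ h, 0 ≤ F h)
    (hFsol : ∀ h : ℝ,
      (∃ x : ℝ, 0 ≤ x ∧
        ∑' n : ℕ, K (n + 1) * Real.exp (-h) * Real.exp (-x * (n + 1)) = 1) →
      ∑' n : ℕ, K (n + 1) * Real.exp (-h) * Real.exp (-(F h) * (n + 1)) = 1)
    (hFnosol : ∀ h : ℝ,
      (¬ ∃ x : ℝ, 0 ≤ x ∧
        ∑' n : ℕ, K (n + 1) * Real.exp (-h) * Real.exp (-x * (n + 1)) = 1) →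
      F h = 0) :
    (∃ c₁ c₂ δ₀ : ℝ, 0 < c₁ ∧ 0 < c₂ ∧ 0 < δ₀ ∧ ∀ δ : ℝ, 0 < δ → δ ≤ δ₀ →
      c₁ * δ ^ (1 / (α - 1)) ≤ F (Real.log (∑' n : ℕ, K (n + 1)) - δ) ∧
      F (Real.log (∑' n : ℕ, K (n + 1)) - δ) ≤ c₂ * δ ^ (1 / (α - 1))) ∧
    Tendsto (fun δ : ℝ => F (Real.log (∑' n : ℕ, K (n + 1)) - δ) / δ)
      (nhdsWithin 0 (Set.Ioi 0)) (nhds 0) :=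
  pinning_higher_order_transition_general K hKnonneg hSpos C α hC hα₁ hα₂ hasym F hFnonneg hFsol
end
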